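/- Let q be a prime. Define, for nonzero complex u in a punctured neighborhood of 0, F₁(u) = u·(1−q^{−1−2u})·ζ(1+2u) · ζ(2+2u)³/ζ(4+4u) · (4π²/q)^{−u} · Γ(1+u)² · e^{u²}. Then F₁ is complex differentiable at every u ≠ 0 in some punctured neighborhood of 0, and as u → 0 through nonzero values, F₁′(u) tends to (1−q^{−1})·(ζ(2)³/(2ζ(4)))·( log(q/(4π²)) + 6ζ′(2)/ζ(2) − 4ζ′(4)/ζ(4) ) + (log q/q)·ζ(2)³/ζ(4). -/

import Mathlib

open Complex Filter Topology

/-- The function `F₁` from the evaluation of the main term `Δ₁` in the proof of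
Theorem 1.2 at `t = 0`:
`F₁(u) = u·(1−q^{−1−2u})·ζ(1+2u) · ζ(2+2u)³/ζ(4+4u) · (4π²/q)^{−u} · Γ(1+u)² · e^{u²}`. -/
noncomputable def F₁ (q : ℕ) (u : ℂ) : ℂ :=
  u * (1 - (q : ℂ) ^ (-1 - 2 * u)) * riemannZeta (1 + 2 * u) *
    (riemannZeta (2 + 2 * u) ^ 3 / riemannZeta (4 + 4 * u)) *
    ((4 * Real.pi ^ 2 / q : ℝ) : ℂ) ^ (-u) * Complex.Gamma (1 + u) ^ 2 *
    Complex.exp (u ^ 2)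

local notation "γ" => Real.eulerMascheroniConstant

/-- Analytic extension of `u ↦ u·ζ(1+2u)` across `u = 0`. -/
noncomputable def Zx (u : ℂ) : ℂ := if u = 0 then 1 / 2 else u * riemannZeta (1 + 2 * u)

/-- The remaining (regular) factor of `F₁`. -/
noncomputable def Ax (q : ℕ) (u : ℂ) : ℂ :=
  (1 - (q : ℂ) ^ (-1 - 2 * u)) * (riemannZeta (2 + 2 * u) ^ 3 / riemannZeta (4 + 4 * u)) *
    ((4 * Real.pi ^ 2 / q : ℝ) : ℂ) ^ (-u) * Complex.Gamma (1 + u) ^ 2 *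
    Complex.exp (u ^ 2)

lemma F₁_eq_Zx_mul_Ax (q : ℕ) {u : ℂ} (hu : u ≠ 0) : F₁ q u = Zx u * Ax q u := by
  simp only [F₁, Zx, Ax, if_neg hu]; ring

lemma tendsto_affine_punctured : Tendsto (fun u : ℂ => 1 + 2 * u) (𝓝[≠] 0) (𝓝[≠] 1) := by
  apply tendsto_nhdsWithin_of_tendsto_nhds_of_eventually_within
  · have : Tendsto (fun u : ℂ => 1 + 2 * u) (𝓝 0) (𝓝 (1 + 2 * 0)) := by
      exact (tendsto_const_nhds.add ((continuous_const.mul continuous_id).tendsto 0))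
    simpa using this.mono_left nhdsWithin_le_nhds
  · filter_upwards [self_mem_nhdsWithin] with u hu
    simp only [Set.mem_compl_iff, Set.mem_singleton_iff] at hu ⊢
    intro h
    apply hu
    have : (2 : ℂ) * u = 0 := by linear_combination h
    simpa using this

lemma Zx_tendsto : Tendsto Zx (𝓝[≠] (0 : ℂ)) (𝓝 (1 / 2)) := by
  have h2 := riemannZeta_residue_one.comp tendsto_affine_punctured
  have h3 := h2.const_mul (1 / 2 : ℂ)
  rw [mul_one] at h3
  refine h3.congr' ?_
  filter_upwards [self_mem_nhdsWithin] with u hu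
  simp only [Set.mem_compl_iff, Set.mem_singleton_iff] at hu
  simp only [Function.comp_apply, Zx, if_neg hu]
  ring

lemma Zx_continuousAt : ContinuousAt Zx 0 := by
  have h0 : Zx 0 = 1 / 2 := if_pos rfl
  rw [ContinuousAt, h0, ← nhdsNE_sup_pure]
  refine Tendsto.sup Zx_tendsto ?_
  rw [tendsto_pure_left]
  intro s hs
  rw [h0]
  exact mem_of_mem_nhds hs

lemma Zx_diff_ne {u : ℂ} (hu : u ≠ 0) : DifferentiableAt ℂ Zx u := by
  have h1 : (1 : ℂ) + 2 * u ≠ 1 := by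
    intro h
    apply hu
    have : (2 : ℂ) * u = 0 := by linear_combination h
    simpa using this
  have hd : DifferentiableAt ℂ (fun u : ℂ => u * riemannZeta (1 + 2 * u)) u := by
    refine differentiableAt_id.mul ?_
    exact (differentiableAt_riemannZeta h1).comp u
      ((differentiableAt_const _).add (differentiableAt_id.const_mul 2))
  refine hd.congr_of_eventuallyEq ?_
  filter_upwards [isOpen_compl_singleton.mem_nhds hu] with v hv
  exact if_neg hv

lemma Zx_analyticAt : AnalyticAt ℂ Zx 0 := by
  refine Complex.analyticAt_of_differentiable_on_punctured_nhds_of_continuousAt ?_ Zx_continuousAt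
  filter_upwards [self_mem_nhdsWithin] with u hu
  exact Zx_diff_ne hu

lemma Zx_hasDerivAt : HasDerivAt Zx (γ : ℂ) 0 := by
  have hd := Zx_analyticAt.differentiableAt.hasDerivAt
  have hs := hasDerivAt_iff_tendsto_slope.mp hd
  have hγ : Tendsto (slope Zx 0) (𝓝[≠] (0 : ℂ)) (𝓝 (γ : ℂ)) := by
    have h2 := tendsto_riemannZeta_sub_one_div.comp tendsto_affine_punctured
    refine h2.congr' ?_
    filter_upwards [self_mem_nhdsWithin] with u hu
    simp only [Set.mem_compl_iff, Set.mem_singleton_iff] at hu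
    have h0 : Zx 0 = 1 / 2 := if_pos rfl
    rw [slope_def_field, h0, Zx, if_neg hu, Function.comp_apply]
    have h2u : (1 : ℂ) + 2 * u - 1 = 2 * u := by ring
    rw [h2u]
    field_simp
    ring
  have heq : deriv Zx 0 = (γ : ℂ) := tendsto_nhds_unique hs hγ
  rwa [heq] at hd

lemma re_bound {u : ℂ} (hu : ‖u‖ < 1 / 4) : |u.re| < 1 / 4 :=
  lt_of_le_of_lt (Complex.abs_re_le_norm u) hu

lemma two_add_ne_one {u : ℂ} (hu : ‖u‖ < 1 / 4) : (2 : ℂ) + 2 * u ≠ 1 := by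
  have h := re_bound hu
  intro hcon
  have := congrArg Complex.re hcon
  simp [Complex.add_re, Complex.mul_re] at this
  rw [abs_lt] at h
  linarith

lemma four_add_ne_one {u : ℂ} (hu : ‖u‖ < 1 / 4) : (4 : ℂ) + 4 * u ≠ 1 := by
  have h := re_bound hu
  intro hcon
  have := congrArg Complex.re hcon
  simp [Complex.add_re, Complex.mul_re] at this
  rw [abs_lt] at h
  linarith

lemma zeta_four_add_ne_zero {u : ℂ} (hu : ‖u‖ < 1 / 4) :
    riemannZeta (4 + 4 * u) ≠ 0 := by
  have h := re_bound hu
  rw [abs_lt] at h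
  refine riemannZeta_ne_zero_of_one_lt_re ?_
  simp only [Complex.add_re, Complex.mul_re]
  have : (4 : ℂ).re = 4 := by norm_num
  simp [Complex.add_re, Complex.mul_re]
  linarith

lemma gamma_arg_ne {u : ℂ} (hu : ‖u‖ < 1 / 4) (m : ℕ) : (1 : ℂ) + u ≠ -m := by
  have h := re_bound hu
  rw [abs_lt] at h
  intro hcon
  have := congrArg Complex.re hcon
  simp only [Complex.add_re, Complex.neg_re, Complex.natCast_re, Complex.one_re] at this
  have hm : (0 : ℝ) ≤ (m : ℝ) := Nat.cast_nonneg m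
  linarith

lemma Ax_diff (q : ℕ) (hq : q ≠ 0) {u : ℂ} (hu : ‖u‖ < 1 / 4) :
    DifferentiableAt ℂ (Ax q) u := by
  have hqC : (q : ℂ) ≠ 0 := Nat.cast_ne_zero.mpr hq
  have hx : (0 : ℝ) < 4 * Real.pi ^ 2 / q := by
    have : 0 < Real.pi := Real.pi_pos
    have hq0 : (0 : ℝ) < q := by positivity
    positivity
  have hxC : ((4 * Real.pi ^ 2 / q : ℝ) : ℂ) ≠ 0 := Complex.ofReal_ne_zero.mpr hx.ne'
  have d1 : DifferentiableAt ℂ (fun u : ℂ => 1 - (q : ℂ) ^ (-1 - 2 * u)) u := by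
    refine (differentiableAt_const _).sub ?_
    exact DifferentiableAt.const_cpow
      ((differentiableAt_const _).sub (differentiableAt_id.const_mul 2)) (Or.inl hqC)
  have d2 : DifferentiableAt ℂ
      (fun u : ℂ => riemannZeta (2 + 2 * u) ^ 3 / riemannZeta (4 + 4 * u)) u := by
    have h2 : DifferentiableAt ℂ (fun u : ℂ => riemannZeta (2 + 2 * u)) u :=
      (differentiableAt_riemannZeta (two_add_ne_one hu)).comp u
        ((differentiableAt_const _).add (differentiableAt_id.const_mul 2))
    have h4 : DifferentiableAt ℂ (fun u : ℂ => riemannZeta (4 + 4 * u)) u :=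
      (differentiableAt_riemannZeta (four_add_ne_one hu)).comp u
        ((differentiableAt_const _).add (differentiableAt_id.const_mul 4))
    exact (h2.pow 3).div h4 (zeta_four_add_ne_zero hu)
  have d3 : DifferentiableAt ℂ (fun u : ℂ => ((4 * Real.pi ^ 2 / q : ℝ) : ℂ) ^ (-u)) u :=
    DifferentiableAt.const_cpow differentiableAt_id.neg (Or.inl hxC)
  have d4 : DifferentiableAt ℂ (fun u : ℂ => Complex.Gamma (1 + u) ^ 2) u := by
    refine DifferentiableAt.pow ?_ 2
    exact (Complex.differentiableAt_Gamma _ (gamma_arg_ne hu)).comp u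
      ((differentiableAt_const _).add differentiableAt_id)
  have d5 : DifferentiableAt ℂ (fun u : ℂ => Complex.exp (u ^ 2)) u :=
    (differentiableAt_pow 2).cexp
  exact (((d1.mul d2).mul d3).mul d4).mul d5

set_option maxHeartbeats 1000000 in
theorem stmt_10 (q : ℕ) (hq : q.Prime) :
    (∀ᶠ u in 𝓝[≠] (0 : ℂ), DifferentiableAt ℂ (F₁ q) u) ∧
    Tendsto (deriv (F₁ q)) (𝓝[≠] (0 : ℂ))
      (𝓝 ((1 - (q : ℂ)⁻¹) * (riemannZeta 2 ^ 3 / (2 * riemannZeta 4)) *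
            ((Real.log (q / (4 * Real.pi ^ 2)) : ℂ)
              + 6 * deriv riemannZeta 2 / riemannZeta 2
              - 4 * deriv riemannZeta 4 / riemannZeta 4)
          + ((Real.log q : ℂ) / (q : ℂ)) * (riemannZeta 2 ^ 3 / riemannZeta 4))) := by
  have hq0 : q ≠ 0 := hq.ne_zero
  have hqC : (q : ℂ) ≠ 0 := Nat.cast_ne_zero.mpr hq0
  have hqR : (0 : ℝ) < q := by positivity
  have hx : (0 : ℝ) < 4 * Real.pi ^ 2 / q := by
    have : 0 < Real.pi := Real.pi_pos
    positivity
  have hxC : ((4 * Real.pi ^ 2 / q : ℝ) : ℂ) ≠ 0 := Complex.ofReal_ne_zero.mpr hx.ne'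
  set H : ℂ → ℂ := fun u => Zx u * Ax q u with hH
  -- H is analytic at 0
  have hsmall : ∀ᶠ u : ℂ in 𝓝 0, ‖u‖ < 1 / 4 := by
    have := Metric.ball_mem_nhds (0 : ℂ) (by norm_num : (0 : ℝ) < 1 / 4)
    filter_upwards [this] with u hu
    simpa [Metric.mem_ball, dist_eq_norm] using hu
  have hHdiff : ∀ᶠ u in 𝓝[≠] (0 : ℂ), DifferentiableAt ℂ H u := by
    filter_upwards [self_mem_nhdsWithin, hsmall.filter_mono nhdsWithin_le_nhds] with u hu hn
    simp only [Set.mem_compl_iff, Set.mem_singleton_iff] at hu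
    exact (Zx_diff_ne hu).mul (Ax_diff q hq0 hn)
  have hAx0 : DifferentiableAt ℂ (Ax q) 0 := Ax_diff q hq0 (by norm_num)
  have hHanalytic : AnalyticAt ℂ H 0 :=
    Complex.analyticAt_of_differentiable_on_punctured_nhds_of_continuousAt hHdiff
      (Zx_continuousAt.mul hAx0.continuousAt)
  -- F₁ agrees with H off 0
  have hFH : ∀ {u : ℂ}, u ≠ 0 → F₁ q =ᶠ[𝓝 u] H := by
    intro u hu
    filter_upwards [isOpen_compl_singleton.mem_nhds hu] with v hv
    exact F₁_eq_Zx_mul_Ax q hv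
  -- differentiability of F₁ on punctured nbhd
  have hpart1 : ∀ᶠ u in 𝓝[≠] (0 : ℂ), DifferentiableAt ℂ (F₁ q) u := by
    filter_upwards [self_mem_nhdsWithin, hHdiff] with u hu hd
    simp only [Set.mem_compl_iff, Set.mem_singleton_iff] at hu
    exact hd.congr_of_eventuallyEq (hFH hu)
  refine ⟨hpart1, ?_⟩
  -- continuity of deriv H at 0
  have hderivH : ContinuousAt (deriv H) 0 := by
    have h1 := hHanalytic.fderiv.continuousAt
    have h2 : ContinuousAt (fun x => fderiv ℂ H x 1) 0 :=
      ((ContinuousLinearMap.apply ℂ ℂ (1 : ℂ)).continuous.continuousAt).comp h1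
    exact h2
  -- the explicit derivative of H at 0
  have hZ0 : Zx 0 = 1 / 2 := if_pos rfl
  -- HasDerivAt for each factor of Ax at 0
  have hin : HasDerivAt (fun u : ℂ => -1 - 2 * u) (-(2 * 1)) 0 :=
    ((hasDerivAt_id (0 : ℂ)).const_mul 2).const_sub (-1)
  have h1 : HasDerivAt (fun u : ℂ => 1 - (q : ℂ) ^ (-1 - 2 * u))
      (-((q : ℂ) ^ (-1 - 2 * (0 : ℂ)) * Complex.log q * (-(2 * 1)))) 0 :=
    (hin.const_cpow (Or.inl hqC)).const_sub 1
  have hg2 : HasDerivAt (fun u : ℂ => 2 + 2 * u) (2 * 1) 0 :=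
    ((hasDerivAt_id (0 : ℂ)).const_mul 2).const_add 2
  have hg4 : HasDerivAt (fun u : ℂ => 4 + 4 * u) (4 * 1) 0 :=
    ((hasDerivAt_id (0 : ℂ)).const_mul 4).const_add 4
  have h20 : (2 : ℂ) + 2 * (0 : ℂ) = 2 := by norm_num
  have h40 : (4 : ℂ) + 4 * (0 : ℂ) = 4 := by norm_num
  have hz2 : HasDerivAt riemannZeta (deriv riemannZeta 2) ((fun u : ℂ => 2 + 2 * u) 0) := by
    rw [show (fun u : ℂ => 2 + 2 * u) 0 = 2 by norm_num]
    exact (differentiableAt_riemannZeta (by norm_num : (2 : ℂ) ≠ 1)).hasDerivAt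
  have hz4 : HasDerivAt riemannZeta (deriv riemannZeta 4) ((fun u : ℂ => 4 + 4 * u) 0) := by
    rw [show (fun u : ℂ => 4 + 4 * u) 0 = 4 by norm_num]
    exact (differentiableAt_riemannZeta (by norm_num : (4 : ℂ) ≠ 1)).hasDerivAt
  have hc2 : HasDerivAt (fun u : ℂ => riemannZeta (2 + 2 * u)) (deriv riemannZeta 2 * (2 * 1)) 0 :=
    HasDerivAt.comp 0 hz2 hg2
  have hc4 : HasDerivAt (fun u : ℂ => riemannZeta (4 + 4 * u)) (deriv riemannZeta 4 * (4 * 1)) 0 :=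
    HasDerivAt.comp 0 hz4 hg4
  have hz4ne : riemannZeta (4 + 4 * (0 : ℂ)) ≠ 0 := by
    rw [h40]; exact riemannZeta_ne_zero_of_one_lt_re (by norm_num)
  have h2 : HasDerivAt (fun u : ℂ => riemannZeta (2 + 2 * u) ^ 3 / riemannZeta (4 + 4 * u))
      (((3 : ℂ) * riemannZeta (2 + 2 * (0 : ℂ)) ^ (3 - 1) * (deriv riemannZeta 2 * (2 * 1)) *
          riemannZeta (4 + 4 * (0 : ℂ)) -
        riemannZeta (2 + 2 * (0 : ℂ)) ^ 3 * (deriv riemannZeta 4 * (4 * 1))) /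
        riemannZeta (4 + 4 * (0 : ℂ)) ^ 2) 0 :=
    (hc2.pow 3).div hc4 hz4ne
  have h3 : HasDerivAt (fun u : ℂ => ((4 * Real.pi ^ 2 / q : ℝ) : ℂ) ^ (-u))
      (((4 * Real.pi ^ 2 / q : ℝ) : ℂ) ^ (-(0 : ℂ)) *
        Complex.log ((4 * Real.pi ^ 2 / q : ℝ) : ℂ) * (-1)) 0 :=
    (hasDerivAt_id (0 : ℂ)).neg.const_cpow (Or.inl hxC)
  have hG : HasDerivAt Complex.Gamma (-(γ : ℝ) : ℂ) ((fun u : ℂ => 1 + u) 0) := by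
    rw [show (fun u : ℂ => 1 + u) 0 = 1 by norm_num]
    exact Complex.hasDerivAt_Gamma_one
  have hgadd : HasDerivAt (fun u : ℂ => 1 + u) 1 0 := (hasDerivAt_id (0 : ℂ)).const_add 1
  have hGc : HasDerivAt (fun u : ℂ => Complex.Gamma (1 + u)) ((-(γ : ℝ) : ℂ) * 1) 0 :=
    HasDerivAt.comp 0 hG hgadd
  have h4 : HasDerivAt (fun u : ℂ => Complex.Gamma (1 + u) ^ 2)
      ((2 : ℂ) * Complex.Gamma (1 + (0 : ℂ)) ^ (2 - 1) * ((-(γ : ℝ) : ℂ) * 1)) 0 :=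
    hGc.pow 2
  have h5 : HasDerivAt (fun u : ℂ => Complex.exp (u ^ 2))
      (Complex.exp ((0 : ℂ) ^ 2) * ((2 : ℂ) * (0 : ℂ) ^ (2 - 1) * 1)) 0 := by
    exact ((hasDerivAt_id (0 : ℂ)).pow 2).cexp
  have hAxD := (((h1.mul h2).mul h3).mul h4).mul h5
  have hAxD' : HasDerivAt (Ax q) _ 0 := hAxD
  have hHD := Zx_hasDerivAt.mul hAxD'
  have hderiv0 : deriv H 0 = (γ : ℂ) * Ax q 0 + Zx 0 * _ := hHD.deriv
  -- Tendsto deriv H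
  have htend : Tendsto (deriv H) (𝓝[≠] (0 : ℂ)) (𝓝 (deriv H 0)) :=
    hderivH.continuousWithinAt.tendsto
  have htendF : Tendsto (deriv (F₁ q)) (𝓝[≠] (0 : ℂ)) (𝓝 (deriv H 0)) := by
    refine htend.congr' ?_
    filter_upwards [self_mem_nhdsWithin] with u hu
    simp only [Set.mem_compl_iff, Set.mem_singleton_iff] at hu
    exact ((hFH hu).deriv_eq).symm
  -- identify the limit
  convert htendF using 2
  rw [hderiv0]
  have hAx0val : Ax q 0 = (1 - (q : ℂ)⁻¹) * (riemannZeta 2 ^ 3 / riemannZeta 4) := by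
    simp only [Ax]
    norm_num [Complex.Gamma_one, Complex.exp_zero, Complex.cpow_zero, Complex.cpow_neg_one]
  have hlogq : Complex.log (q : ℂ) = ((Real.log q : ℝ) : ℂ) := by
    rw [show ((q : ℕ) : ℂ) = ((q : ℝ) : ℂ) by push_cast; ring, ← Complex.ofReal_log hqR.le]
  have hlogx : Complex.log ((4 * Real.pi ^ 2 / q : ℝ) : ℂ)
      = ((Real.log (4 * Real.pi ^ 2 / q) : ℝ) : ℂ) := (Complex.ofReal_log hx.le).symm
  have hlogflip : Real.log ((q : ℝ) / (4 * Real.pi ^ 2)) = -Real.log (4 * Real.pi ^ 2 / q) := by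
    rw [← Real.log_inv, inv_div]
  have hcpowq : (q : ℂ) ^ (-1 - 2 * (0 : ℂ)) = (q : ℂ)⁻¹ := by
    norm_num [Complex.cpow_neg_one]
  rw [hZ0, hAx0val, hcpowq, h20, h40, hlogq, hlogx, hlogflip]
  have hz2ne : riemannZeta 2 ≠ 0 := riemannZeta_ne_zero_of_one_lt_re (by norm_num)
  have hz4ne' : riemannZeta 4 ≠ 0 := riemannZeta_ne_zero_of_one_lt_re (by norm_num)
  norm_num [Complex.Gamma_one, Complex.exp_zero, Complex.cpow_zero, Complex.cpow_neg_one]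
  simp only [div_eq_mul_inv, mul_inv, ← inv_pow]
  linear_combination (3 * (1 - (q : ℂ)⁻¹) * riemannZeta 2 ^ 2 * deriv riemannZeta 2 *
      (riemannZeta 4)⁻¹) * (mul_inv_cancel₀ hz2ne) -
    (3 * (1 - (q : ℂ)⁻¹) * riemannZeta 2 ^ 2 * deriv riemannZeta 2 *
      (riemannZeta 4)⁻¹) * (mul_inv_cancel₀ hz4ne')
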